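/- arXiv:1908.04232 — 8 statements merged into one kernel-verified Lean document; each statement's English description precedes it below -/
import Mathlib

section
/- Let M ∈ ℝ^{Y×X} with all entries of absolute value at most 1, and let Λ_1, …, Λ_n ∈ ℝ^{Y×X} be matrices such that ‖Σ_j Λ_j − J‖_∞ ≤ √κ, where J is the all-ones matrix and ‖·‖_∞ denotes the maximum absolute entry. Then the √κ-approximate rank of M (the minimum rank of a matrix within entrywise distance √κ of M) satisfies √κ-rank(M) ≤ Σ_{j=1}^n rank(M ∘ Λ_j). -/
lemma rank_add_le' {m n : Type*} [Fintype n] (A B : Matrix m n ℝ) :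
    (A + B).rank ≤ A.rank + B.rank := by
  unfold Matrix.rank
  rw [Matrix.mulVecLin_add]
  refine le_trans (Submodule.finrank_mono ?_) (Submodule.finrank_add_le_finrank_add_finrank _ _)
  rintro _ ⟨v, rfl⟩
  exact Submodule.add_mem_sup ⟨v, rfl⟩ ⟨v, rfl⟩

lemma rank_sum_le' {m n ι : Type*} [Fintype n] (s : Finset ι) (f : ι → Matrix m n ℝ) :
    (∑ i ∈ s, f i).rank ≤ ∑ i ∈ s, (f i).rank := by
  classical
  induction s using Finset.cons_induction with
  | empty => simp [Matrix.rank_zero]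
  | cons a s ha ih =>
    rw [Finset.sum_cons, Finset.sum_cons]
    exact le_trans (rank_add_le' _ _) (by omega)

/-- If `‖M‖_∞ ≤ 1` and `‖Σ_j Λ_j − J‖_∞ ≤ √κ`, then the `√κ`-approximate rank of `M` is at
most `Σ_j rank(M ∘ Λ_j)`: there is a matrix `N` within entrywise distance `√κ` of `M` with
`rank N ≤ Σ_j rank(M ∘ Λ_j)`. -/
theorem stmt2 {Y X : Type*} [Fintype Y] [Fintype X] [DecidableEq Y] [DecidableEq X]
    (n : ℕ) (M : Matrix Y X ℝ) (Λ : Fin n → Matrix Y X ℝ) (κ : ℝ) (hκ : 0 ≤ κ)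
    (hM : ∀ y x, |M y x| ≤ 1)
    (hΛ : ∀ y x, |(∑ j, Λ j) y x - 1| ≤ Real.sqrt κ) :
    ∃ N : Matrix Y X ℝ, (∀ y x, |M y x - N y x| ≤ Real.sqrt κ) ∧
      N.rank ≤ ∑ j, (Matrix.hadamard M (Λ j)).rank := by
  refine ⟨∑ j, Matrix.hadamard M (Λ j), fun y x => ?_, rank_sum_le' _ _⟩
  have hval : (∑ j, Matrix.hadamard M (Λ j)) y x = M y x * (∑ j, Λ j) y x := by
    simp [Matrix.sum_apply, Matrix.hadamard, Finset.mul_sum]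
  rw [hval]
  have : M y x - M y x * (∑ j, Λ j) y x = M y x * (1 - (∑ j, Λ j) y x) := by ring
  rw [this, abs_mul]
  calc |M y x| * |1 - (∑ j, Λ j) y x| ≤ 1 * Real.sqrt κ := by
        apply mul_le_mul (hM y x) ?_ (abs_nonneg _) zero_le_one
        rw [abs_sub_comm]; exact hΛ y x
    _ = Real.sqrt κ := one_mul _
end

section
/- For any angle θ with |θ| ≤ π and any positive integer T, the quantity p(θ) = |Σ_{t=0}^{T−1} e^{itθ}|² / T² satisfies p(θ) ≥ 1 − T²θ²/8. -/
/-!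
Expanding the square, `‖∑_t e^{itθ}‖² = ∑_{t,s} cos((t - s)θ)`, and `cos x ≥ 1 - x²/2` bounds this
below by `T² - θ²/2 · ∑_{t,s} (t - s)² = T² - θ² T² (T² - 1)/12`, which is at least
`T² (1 - T²θ²/8)`.
-/

open Finset

lemma norm_sq_sum_exp_mul_I {ι : Type*} (s : Finset ι) (x : ι → ℝ) :
    ‖∑ i ∈ s, Complex.exp (x i * Complex.I)‖ ^ 2 =
      ∑ i ∈ s, ∑ j ∈ s, Real.cos (x i - x j) := by
  have hre : (∑ i ∈ s, Complex.exp (x i * Complex.I)).re = ∑ i ∈ s, Real.cos (x i) := by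
    simp only [Complex.re_sum, Complex.exp_ofReal_mul_I_re]
  have him : (∑ i ∈ s, Complex.exp (x i * Complex.I)).im = ∑ i ∈ s, Real.sin (x i) := by
    simp only [Complex.im_sum, Complex.exp_ofReal_mul_I_im]
  rw [Complex.sq_norm, Complex.normSq_apply, hre, him, sum_mul_sum, sum_mul_sum,
    ← sum_add_distrib]
  refine sum_congr rfl fun i _ => ?_
  rw [← sum_add_distrib]
  exact sum_congr rfl fun j _ => (Real.cos_sub _ _).symm

lemma card_sq_sub_le_norm_sq_sum_exp_mul_I {ι : Type*} (s : Finset ι) (x : ι → ℝ) :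
    (#s : ℝ) ^ 2 - (∑ i ∈ s, ∑ j ∈ s, (x i - x j) ^ 2) / 2 ≤
      ‖∑ i ∈ s, Complex.exp (x i * Complex.I)‖ ^ 2 := by
  rw [norm_sq_sum_exp_mul_I]
  calc (#s : ℝ) ^ 2 - (∑ i ∈ s, ∑ j ∈ s, (x i - x j) ^ 2) / 2
      = ∑ i ∈ s, ∑ j ∈ s, (1 - (x i - x j) ^ 2 / 2) := by
        simp only [sum_sub_distrib, sum_const, nsmul_eq_mul, mul_one, ← sum_div]
        ring
    _ ≤ ∑ i ∈ s, ∑ j ∈ s, Real.cos (x i - x j) :=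
        sum_le_sum fun _ _ => sum_le_sum fun _ _ => Real.one_sub_sq_div_two_le_cos

lemma sum_range_natCast (n : ℕ) : ∑ t ∈ range n, (t : ℝ) = n * (n - 1) / 2 := by
  induction n with
  | zero => simp
  | succ k ih => rw [sum_range_succ, ih]; push_cast; ring

lemma sum_range_natCast_sq (n : ℕ) :
    ∑ t ∈ range n, (t : ℝ) ^ 2 = n * (n - 1) * (2 * n - 1) / 6 := by
  induction n with
  | zero => simp
  | succ k ih => rw [sum_range_succ, ih]; push_cast; ring

lemma sum_range_sum_range_sub_sq (n : ℕ) :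
    ∑ t ∈ range n, ∑ s ∈ range n, ((t : ℝ) - s) ^ 2 = (n : ℝ) ^ 2 * ((n : ℝ) ^ 2 - 1) / 6 := by
  simp only [sub_sq, sum_add_distrib, sum_sub_distrib, sum_const, card_range, nsmul_eq_mul,
    ← mul_sum, ← sum_mul, sum_range_natCast, sum_range_natCast_sq]
  ring

theorem stmt4_general (θ : ℝ) (T : ℕ) (hT : 1 ≤ T) :
    1 - (T : ℝ) ^ 2 * θ ^ 2 / 8 ≤
      ‖∑ t ∈ Finset.range T, Complex.exp ((t : ℂ) * (θ : ℂ) * Complex.I)‖ ^ 2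
        / (T : ℝ) ^ 2 := by
  have hbound := card_sq_sub_le_norm_sq_sum_exp_mul_I (range T) fun t => (t : ℝ) * θ
  have hsq : ∑ t ∈ range T, ∑ s ∈ range T, ((t : ℝ) * θ - s * θ) ^ 2 =
      θ ^ 2 * ((T : ℝ) ^ 2 * ((T : ℝ) ^ 2 - 1) / 6) := by
    simp only [← sub_mul, mul_pow, ← sum_mul, sum_range_sum_range_sub_sq]
    ring
  push_cast at hbound
  rw [hsq, card_range] at hbound
  have hT0 : (0 : ℝ) < (T : ℝ) ^ 2 := by positivity
  rw [le_div_iff₀ hT0]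
  nlinarith [sq_nonneg ((T : ℝ) * θ)]

/-- For `|θ| ≤ π` and a positive integer `T`, the phase-estimation acceptance probability
`p(θ) = |Σ_{t<T} e^{itθ}|²/T²` satisfies `p(θ) ≥ 1 − T²θ²/8`. -/
theorem stmt4 (θ : ℝ) (hθ : |θ| ≤ Real.pi) (T : ℕ) (hT : 1 ≤ T) :
    1 - (T : ℝ) ^ 2 * θ ^ 2 / 8 ≤
      ‖∑ t ∈ Finset.range T, Complex.exp ((t : ℂ) * (θ : ℂ) * Complex.I)‖ ^ 2
        / (T : ℝ) ^ 2 :=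
  stmt4_general θ T hT
end

section
/- Let U be a unitary on a finite-dimensional complex Hilbert space with eigendecomposition U = Σ_j e^{iθ_j} |λ_j⟩⟨λ_j| where θ_j ∈ (−π, π]. Let Π_Θ be the projector onto eigenvectors with |θ_j| ≤ Θ for some Θ ∈ (0, π). Then the vector v = (I − U†)⁺ (I − Π_Θ)ψ (Moore–Penrose pseudoinverse applied to the component of ψ outside the small-phase eigenspaces) satisfies ‖v‖² ≤ π²/(4Θ²) · ‖ψ‖² for any unit vector ψ. -/
/-!
Since `U` is unitary, `EΘ` is invariant under `U` and `U†`, so both `EΘ` and `EΘᗮ` are invariant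
under `I - U†`; together with `v ⊥ ker (I - U†)` this forces `v ∈ EΘᗮ`.
An eigenvector of the self-adjoint operator `U + U†` for the eigenvalue `2 cos θ` satisfies
`U²x - 2 cos θ • Ux + x = 0`, so it splits into eigenvectors of `U` for `e^{± iθ}`. Hence every
eigenvector of `U + U†` with eigenvalue above `2 cos Θ` lies in `EΘ`, and on `EΘᗮ` the quadratic
form of `U + U†` is at most `2 cos Θ`. Therefore
`‖ψ‖² ≥ ‖(I - U†)v‖² = 2‖v‖² - Re⟪(U + U†)v, v⟫ ≥ (2 - 2 cos Θ)‖v‖² ≥ (4Θ²/π²)‖v‖²`.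
-/

open Module.End

namespace Module.End

variable {R V : Type*} [CommRing R] [AddCommGroup V] [Module R V]

theorem mem_eigenspace_sup_eigenspace_of_quadratic {K : Type*} [Field K] [Module K V]
    {f : End K V} {a b : K} (hab : a ≠ b) {x : V}
    (hx : f (f x) - (a + b) • f x + (a * b) • x = 0) :
    x ∈ eigenspace f a ⊔ eigenspace f b := by
  have hb : f x - a • x ∈ eigenspace f b := by
    rw [mem_eigenspace_iff, map_sub, map_smul, ← sub_eq_zero, ← hx]
    module
  have ha : f x - b • x ∈ eigenspace f a := by
    rw [mem_eigenspace_iff, map_sub, map_smul, ← sub_eq_zero, ← hx]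
    module
  have hx' : x = (b - a)⁻¹ • (f x - a • x) - (b - a)⁻¹ • (f x - b • x) := by
    rw [← smul_sub, sub_sub_sub_cancel_left, ← sub_smul, smul_smul,
      inv_mul_cancel₀ (sub_ne_zero.mpr hab.symm), one_smul]
  rw [hx']
  exact sub_mem (Submodule.smul_mem _ _ (Submodule.mem_sup_right hb))
    (Submodule.smul_mem _ _ (Submodule.mem_sup_left ha))

theorem iSup_eigenspace_mem_invtSubmodule_of_commute {f g : End R V} (h : Commute f g)
    {ι : Type*} (p : ι → Prop) (μ : ι → R) :
    (⨆ i, ⨆ _ : p i, eigenspace f (μ i)) ∈ invtSubmodule g := by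
  simp only [mem_invtSubmodule_iff_map_le, Submodule.map_iSup]
  exact iSup_mono fun i => iSup_mono fun _ =>
    Submodule.map_le_iff_le_comap.mpr (mapsTo_genEigenspace_of_comm h (μ i) 1)

theorem mem_invtSubmodule_id_sub {f : End R V} {W : Submodule R V} (h : W ∈ invtSubmodule f) :
    W ∈ invtSubmodule (LinearMap.id - f) :=
  (mem_invtSubmodule_iff_forall_mem_of_mem _).mpr fun _ hx => sub_mem hx (h hx)

end Module.End

section InnerProductSpace

open scoped InnerProductSpace

variable {𝕜 E : Type*} [RCLike 𝕜] [NormedAddCommGroup E] [InnerProductSpace 𝕜 E]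

theorem Submodule.mem_orthogonal_of_apply_mem_orthogonal {W : Submodule 𝕜 E}
    [W.HasOrthogonalProjection] {T : E →ₗ[𝕜] E} (hW : W ∈ invtSubmodule T)
    (hW' : Wᗮ ∈ invtSubmodule T) {v : E} (hTv : T v ∈ Wᗮ)
    (hv : ∀ z, T z = 0 → ⟪z, v⟫_𝕜 = 0) : v ∈ Wᗮ := by
  set p := W.starProjection v
  have hp : p ∈ W := W.starProjection_apply_mem v
  have hvp : v - p ∈ Wᗮ := W.sub_starProjection_mem_orthogonal v
  have hTp : T p = 0 := by
    have hTpW : T p ∈ W := hW hp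
    have hTpW' : T p ∈ Wᗮ := by
      rw [← sub_sub_cancel v p, map_sub]
      exact sub_mem hTv (hW' hvp)
    exact inner_self_eq_zero.mp (Submodule.inner_right_of_mem_orthogonal hTpW hTpW')
  have hp0 : p = 0 := by
    rw [← inner_self_eq_zero (𝕜 := 𝕜)]
    calc ⟪p, p⟫_𝕜 = ⟪p, v⟫_𝕜 - ⟪p, v - p⟫_𝕜 := by rw [inner_sub_right, sub_sub_cancel]
      _ = 0 := by rw [hv p hTp, Submodule.inner_right_of_mem_orthogonal hp hvp, sub_zero]
  simpa [hp0] using hvp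

theorem LinearMap.IsSymmetric.re_inner_apply_self_le [FiniteDimensional 𝕜 E] {A : E →ₗ[𝕜] E}
    (hA : A.IsSymmetric) {c : ℝ} {v : E} (hv : ∀ μ : ℝ, c < μ → v ∈ (eigenspace A μ)ᗮ) :
    RCLike.re ⟪A v, v⟫_𝕜 ≤ c * ‖v‖ ^ 2 := by
  set b := hA.eigenvectorBasis rfl
  set μ := hA.eigenvalues rfl
  have hcoef : ∀ i, c < μ i → b.repr v i = 0 := fun i hi => by
    rw [b.repr_apply_apply]
    exact Submodule.inner_right_of_mem_orthogonal
      (mem_eigenspace_iff.mpr (hA.apply_eigenvectorBasis rfl i)) (hv _ hi)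
  have hnorm : ‖v‖ ^ 2 = ∑ i, ‖b.repr v i‖ ^ 2 := by
    rw [← b.repr.norm_map, EuclideanSpace.norm_sq_eq]
  have hAv : RCLike.re ⟪A v, v⟫_𝕜 = ∑ i, μ i * ‖b.repr v i‖ ^ 2 := by
    rw [← b.repr.inner_map_map, PiLp.inner_apply, map_sum]
    refine Finset.sum_congr rfl fun i _ => ?_
    rw [hA.eigenvectorBasis_apply_self_apply, ← smul_eq_mul, inner_smul_left,
      inner_self_eq_norm_sq_to_K, RCLike.conj_ofReal, ← RCLike.ofReal_pow, ← RCLike.ofReal_mul,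
      RCLike.ofReal_re]
  rw [hAv, hnorm, Finset.mul_sum]
  refine Finset.sum_le_sum fun i _ => ?_
  rcases le_or_gt (μ i) c with h | h
  · exact mul_le_mul_of_nonneg_right h (by positivity)
  · simp [hcoef i h]

namespace LinearMap

variable [FiniteDimensional 𝕜 E] {U : E →ₗ[𝕜] E}

theorem mem_unitary_of_inner_map_map (hU : ∀ x y, ⟪U x, U y⟫_𝕜 = ⟪x, y⟫_𝕜) :
    U ∈ unitary (E →ₗ[𝕜] E) := by
  have h : star U * U = 1 :=
    LinearMap.ext fun x => ext_inner_left 𝕜 fun y => by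
      rw [Module.End.mul_apply, star_eq_adjoint, adjoint_inner_right, hU]
      rfl
  exact Unitary.mem_iff.mpr ⟨h, mul_eq_one_comm.mp h⟩

theorem apply_adjoint_apply_of_mem_unitary (hU : U ∈ unitary (E →ₗ[𝕜] E)) (x : E) :
    U (U.adjoint x) = x := by
  rw [← Module.End.mul_apply, ← star_eq_adjoint, Unitary.mul_star_self_of_mem hU,
    Module.End.one_apply]

theorem norm_sub_adjoint_apply_sq (hU : U ∈ unitary (E →ₗ[𝕜] E)) (x : E) :
    ‖x - U.adjoint x‖ ^ 2 = 2 * ‖x‖ ^ 2 - RCLike.re ⟪(U + U.adjoint) x, x⟫_𝕜 := by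
  have hUU : ⟪U.adjoint x, U.adjoint x⟫_𝕜 = ⟪x, x⟫_𝕜 := by
    rw [adjoint_inner_left, apply_adjoint_apply_of_mem_unitary hU]
  have hre : RCLike.re ⟪U x, x⟫_𝕜 = RCLike.re ⟪x, U.adjoint x⟫_𝕜 := by
    rw [adjoint_inner_right]
  rw [@norm_sub_sq 𝕜, @norm_sq_eq_re_inner 𝕜 _ _ _ _ (U.adjoint x), hUU,
    ← @norm_sq_eq_re_inner 𝕜, add_apply, inner_add_left, map_add, hre, inner_re_symm x]
  ring

theorem norm_sub_adjoint_apply_sq_of_mem_eigenspace (hU : U ∈ unitary (E →ₗ[𝕜] E)) {μ : ℝ}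
    {x : E} (hx : x ∈ eigenspace (U + U.adjoint) μ) :
    ‖x - U.adjoint x‖ ^ 2 = (2 - μ) * ‖x‖ ^ 2 := by
  rw [norm_sub_adjoint_apply_sq hU, mem_eigenspace_iff.mp hx, inner_smul_left,
    RCLike.conj_ofReal, inner_self_eq_norm_sq_to_K, ← RCLike.ofReal_pow, ← RCLike.ofReal_mul,
    RCLike.ofReal_re]
  ring

theorem eigenspace_add_adjoint_eq_bot (hU : U ∈ unitary (E →ₗ[𝕜] E)) {μ : ℝ} (hμ : 2 < μ) :
    eigenspace (U + U.adjoint) μ = ⊥ := by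
  refine (Submodule.eq_bot_iff _).mpr fun x hx =>
    norm_eq_zero.mp ((pow_eq_zero_iff two_ne_zero).mp ?_)
  have h : 0 ≤ (2 - μ) * ‖x‖ ^ 2 :=
    norm_sub_adjoint_apply_sq_of_mem_eigenspace hU hx ▸ sq_nonneg _
  exact le_antisymm (nonpos_of_mul_nonneg_right h (by linarith)) (sq_nonneg _)

end LinearMap

end InnerProductSpace

namespace LinearMap

open Complex

variable {H : Type*} [NormedAddCommGroup H] [InnerProductSpace ℂ H] [FiniteDimensional ℂ H]
  {U : H →ₗ[ℂ] H}

theorem eigenspace_add_adjoint_le_sup (hU : U ∈ unitary (H →ₗ[ℂ] H)) {θ : ℝ} (hθ : 0 ≤ θ)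
    (hθπ : θ < Real.pi) :
    eigenspace (U + U.adjoint) ↑(2 * Real.cos θ) ≤
      eigenspace U (exp (θ * I)) ⊔ eigenspace U (exp (-θ * I)) := by
  intro x hx
  rcases hθ.eq_or_lt with rfl | hθ
  · have hfix : U.adjoint x = x := by
      have h := norm_sub_adjoint_apply_sq_of_mem_eigenspace hU (μ := 2 * Real.cos 0) hx
      rw [Real.cos_zero, mul_one, sub_self, zero_mul, pow_eq_zero_iff two_ne_zero, norm_eq_zero,
        sub_eq_zero] at h
      exact h.symm
    refine Submodule.mem_sup_left (mem_eigenspace_iff.mpr ?_)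
    rw [ofReal_zero, zero_mul, exp_zero, one_smul]
    simpa only [hfix] using apply_adjoint_apply_of_mem_unitary hU x
  · refine mem_eigenspace_sup_eigenspace_of_quadratic ?_ ?_
    · intro h
      have h' := congrArg im h
      rw [← ofReal_neg, exp_ofReal_mul_I_im, exp_ofReal_mul_I_im, Real.sin_neg] at h'
      linarith [Real.sin_pos_of_pos_of_lt_pi hθ hθπ]
    · have hUx : U (U x) + x = (2 * Real.cos θ : ℂ) • U x := by
        have h := congrArg U (mem_eigenspace_iff.mp hx)
        rwa [add_apply, map_add, apply_adjoint_apply_of_mem_unitary hU, map_smul, ofReal_mul,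
          ofReal_ofNat] at h
      rw [← two_cos, ← exp_add, show (θ : ℂ) * I + -θ * I = 0 by ring, exp_zero, one_smul,
        ← ofReal_cos, ← hUx]
      abel

theorem eigenspace_add_adjoint_le_iSup (hU : U ∈ unitary (H →ₗ[ℂ] H)) {Θ : ℝ} (hΘ : 0 ≤ Θ)
    (hΘπ : Θ < Real.pi) {μ : ℝ} (hμ : 2 * Real.cos Θ < μ) :
    eigenspace (U + U.adjoint) μ ≤ ⨆ θ : ℝ, ⨆ _ : |θ| ≤ Θ, eigenspace U (exp (θ * I)) := by
  rcases le_or_gt μ 2 with hμ2 | hμ2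
  · set θ := Real.arccos (μ / 2)
    have hcos : 2 * Real.cos θ = μ := by
      rw [Real.cos_arccos (by linarith [Real.neg_one_le_cos Θ]) (by linarith)]
      ring
    have hθ : 0 ≤ θ := Real.arccos_nonneg _
    have hθΘ : θ ≤ Θ := by
      rw [← Real.arccos_cos hΘ hΘπ.le]
      exact Real.arccos_le_arccos (by linarith)
    rw [← hcos]
    refine (eigenspace_add_adjoint_le_sup hU hθ (hθΘ.trans_lt hΘπ)).trans (sup_le ?_ ?_)
    · exact le_iSup₂_of_le θ (by rwa [abs_of_nonneg hθ]) le_rfl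
    · exact le_iSup₂_of_le (-θ) (by rwa [abs_neg, abs_of_nonneg hθ]) (by rw [ofReal_neg])
  · exact (eigenspace_add_adjoint_eq_bot hU hμ2).le.trans bot_le

end LinearMap

theorem Real.four_mul_sq_le_pi_sq_mul_two_sub_two_cos {x : ℝ} (hx : |x| ≤ Real.pi) :
    4 * x ^ 2 ≤ Real.pi ^ 2 * (2 - 2 * Real.cos x) := by
  have h := Real.cos_le_one_sub_mul_cos_sq hx
  have hπ : Real.pi ^ 2 * (2 / Real.pi ^ 2) = 2 := by field_simp
  nlinarith [sq_nonneg Real.pi]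

open scoped ComplexInnerProductSpace

theorem stmt6_general {H : Type*} [NormedAddCommGroup H] [InnerProductSpace ℂ H]
    [FiniteDimensional ℂ H]
    (U : H →ₗ[ℂ] H) (hU : ∀ x y : H, ⟪U x, U y⟫ = ⟪x, y⟫)
    (Θ : ℝ) (hΘ : 0 < Θ) (hΘ' : Θ < Real.pi)
    (EΘ : Submodule ℂ H)
    (hE : EΘ = ⨆ θ : ℝ, ⨆ _ : |θ| ≤ Θ,
      Module.End.eigenspace U (Complex.exp ((θ : ℂ) * Complex.I)))
    (ψ v : H)
    (hv : (LinearMap.id - LinearMap.adjoint U : H →ₗ[ℂ] H) v = ψ - (Submodule.orthogonalProjection EΘ ψ : H))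
    (hv' : ∀ z : H, (LinearMap.id - LinearMap.adjoint U : H →ₗ[ℂ] H) z = 0 → ⟪z, v⟫ = 0) :
    ‖v‖ ^ 2 ≤ Real.pi ^ 2 / (4 * Θ ^ 2) * ‖ψ‖ ^ 2 := by
  have hUu : U ∈ unitary (H →ₗ[ℂ] H) := U.mem_unitary_of_inner_map_map hU
  have hEU : EΘ ∈ invtSubmodule U :=
    hE ▸ iSup_eigenspace_mem_invtSubmodule_of_commute (Commute.refl U) _ _
  have hEU' : EΘ ∈ invtSubmodule U.adjoint :=
    hE ▸ iSup_eigenspace_mem_invtSubmodule_of_commute (commute_unitary_self_star hUu) _ _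
  have hEperp : EΘᗮ ∈ invtSubmodule U.adjoint :=
    mem_invtSubmodule_adjoint_iff.mp (by rwa [LinearMap.adjoint_adjoint])
  have hvE : v ∈ EΘᗮ :=
    Submodule.mem_orthogonal_of_apply_mem_orthogonal (mem_invtSubmodule_id_sub hEU')
      (mem_invtSubmodule_id_sub hEperp) (hv ▸ EΘ.sub_starProjection_mem_orthogonal ψ) hv'
  have hsymm : (U + U.adjoint).IsSymmetric :=
    (LinearMap.isSymmetric_iff_isSelfAdjoint _).mpr (IsSelfAdjoint.add_star_self U)
  have hform : RCLike.re ⟪(U + U.adjoint) v, v⟫ ≤ 2 * Real.cos Θ * ‖v‖ ^ 2 :=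
    hsymm.re_inner_apply_self_le fun μ hμ =>
      Submodule.orthogonal_le (hE ▸ U.eigenspace_add_adjoint_le_iSup hUu hΘ.le hΘ' hμ) hvE
  have hTv : ‖v - U.adjoint v‖ ≤ ‖ψ‖ := by
    have h : v - U.adjoint v = EΘᗮ.starProjection ψ := by
      rw [Submodule.starProjection_orthogonal_val]
      exact hv
    exact h ▸ EΘᗮ.norm_starProjection_apply_le ψ
  have hgap : (2 - 2 * Real.cos Θ) * ‖v‖ ^ 2 ≤ ‖ψ‖ ^ 2 := by
    have hnorm := LinearMap.norm_sub_adjoint_apply_sq hUu v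
    nlinarith [norm_nonneg (v - U.adjoint v)]
  have hcos := Real.four_mul_sq_le_pi_sq_mul_two_sub_two_cos (abs_le.mpr ⟨by linarith, hΘ'.le⟩)
  rw [div_mul_eq_mul_div, le_div_iff₀ (by positivity)]
  nlinarith [sq_nonneg ‖v‖, sq_nonneg Real.pi]

/-- If `U` is unitary, `Π_Θ` projects onto the eigenvectors of `U` with eigenphase
`|θ| ≤ Θ`, and `v = (I − U†)⁺(I − Π_Θ)ψ` (characterized as the solution of
`(I − U†)v = (I − Π_Θ)ψ` orthogonal to `ker(I − U†)`), then
`‖v‖² ≤ π²/(4Θ²)·‖ψ‖²` for any unit vector `ψ`. -/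
theorem stmt6 {H : Type*} [NormedAddCommGroup H] [InnerProductSpace ℂ H]
    [FiniteDimensional ℂ H]
    (U : H →ₗ[ℂ] H) (hU : ∀ x y : H, ⟪U x, U y⟫ = ⟪x, y⟫)
    (Θ : ℝ) (hΘ : 0 < Θ) (hΘ' : Θ < Real.pi)
    (EΘ : Submodule ℂ H)
    (hE : EΘ = ⨆ θ : ℝ, ⨆ _ : |θ| ≤ Θ,
      Module.End.eigenspace U (Complex.exp ((θ : ℂ) * Complex.I)))
    (ψ v : H) (hψ : ‖ψ‖ = 1)
    (hv : (LinearMap.id - LinearMap.adjoint U : H →ₗ[ℂ] H) v = ψ - (Submodule.orthogonalProjection EΘ ψ : H))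
    (hv' : ∀ z : H, (LinearMap.id - LinearMap.adjoint U : H →ₗ[ℂ] H) z = 0 → ⟪z, v⟫ = 0) :
    ‖v‖ ^ 2 ≤ Real.pi ^ 2 / (4 * Θ ^ 2) * ‖ψ‖ ^ 2 :=
  stmt6_general U hU Θ hΘ hΘ' EΘ hE ψ v hv hv'
end

section
/- Let A : H → V be a linear map between finite-dimensional real inner product spaces, let τ ∈ V, and suppose there exists w ∈ H with A w = τ. Then the minimum of ‖Π_{K^⊥} ŵ‖² over all ŵ ∈ H with A ŵ = τ, where K ⊆ H is a fixed subspace and Π_{K^⊥} is the orthogonal projection onto K^⊥, times the minimum of ‖ω∘A‖² over all linear functionals ω : V → ℝ with ω(τ) = 1 and ω∘A vanishing on K (when such ω exists), is at least 1. That is: min{‖Π_{K^⊥} ŵ‖² : A ŵ = τ} ≥ 1 / min{‖ω∘A‖² : ω(τ)=1, (ω∘A)|_K = 0}. -/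
/-!
If `A w = τ` and `ω τ = 1` with `ω ∘ A` vanishing on `K`, then `ω ∘ A` does not see the
`K`-component of `w`, so `1 = (ω ∘ A) (Π_{Kᗮ} w) ≤ ‖ω ∘ A‖ ‖Π_{Kᗮ} w‖`. Squaring and passing to
infima gives the duality.
-/

open Submodule

theorem LinearMap.map_orthogonalProjectionOnto_orthogonal_of_le_ker
    {𝕜 E F : Type*} [RCLike 𝕜] [NormedAddCommGroup E] [InnerProductSpace 𝕜 E]
    [AddCommGroup F] [Module 𝕜 F] {K : Submodule 𝕜 E} [K.HasOrthogonalProjection]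
    {f : E →ₗ[𝕜] F} (hf : K ≤ LinearMap.ker f) (w : E) :
    f (Kᗮ.orthogonalProjectionOnto w) = f w := by
  rw [orthogonalProjectionOnto_orthogonal, map_sub, hf (K.starProjection_apply_mem w), sub_zero]

theorem ContinuousLinearMap.one_le_norm_orthogonalProjectionOnto_mul_norm
    {E : Type*} [NormedAddCommGroup E] [InnerProductSpace ℝ E]
    {K : Submodule ℝ E} [K.HasOrthogonalProjection]
    {f : E →L[ℝ] ℝ} (hf : K ≤ LinearMap.ker (f : E →ₗ[ℝ] ℝ)) {w : E} (hw : f w = 1) :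
    1 ≤ ‖(Kᗮ.orthogonalProjectionOnto w : E)‖ * ‖f‖ := by
  have hproj : f (Kᗮ.orthogonalProjectionOnto w) = 1 := by
    rw [← hw]
    exact LinearMap.map_orthogonalProjectionOnto_orthogonal_of_le_ker hf w
  calc (1 : ℝ) = ‖f (Kᗮ.orthogonalProjectionOnto w)‖ := by rw [hproj, norm_one]
    _ ≤ ‖f‖ * ‖(Kᗮ.orthogonalProjectionOnto w : E)‖ := f.le_opNorm _
    _ = _ := mul_comm _ _

theorem Real.one_div_sInf_le_sInf_of_one_le_mul {E S : Set ℝ} (hE : E.Nonempty)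
    (hE0 : ∀ e ∈ E, 0 ≤ e) (hS0 : ∀ s ∈ S, 0 ≤ s) (h : ∀ e ∈ E, ∀ s ∈ S, 1 ≤ e * s) :
    1 / sInf S ≤ sInf E := by
  refine le_csInf hE fun e he => ?_
  rcases S.eq_empty_or_nonempty with rfl | ⟨s, hs⟩
  · simpa using hE0 e he
  have he_pos : 0 < e := by
    by_contra! he_nonpos
    nlinarith [h e he s hs, hS0 s hs]
  have hinv : 1 / e ≤ sInf S :=
    le_csInf ⟨s, hs⟩ fun s' hs' => (div_le_iff₀' he_pos).2 (h e he s' hs')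
  simpa using one_div_le_one_div_of_le (by positivity) hinv

theorem stmt7_general {H V : Type*} [NormedAddCommGroup H] [InnerProductSpace ℝ H]
    [FiniteDimensional ℝ H] [NormedAddCommGroup V] [InnerProductSpace ℝ V]
    (A : H →ₗ[ℝ] V) (τ : V) (K : Submodule ℝ H)
    (hpos : ∃ w : H, A w = τ) :
    sInf {e : ℝ | ∃ w : H, A w = τ ∧ e = ‖(Submodule.orthogonalProjectionOnto Kᗮ w : H)‖ ^ 2}
      ≥ 1 / sInf {s : ℝ | ∃ ω : V →ₗ[ℝ] ℝ, ω τ = 1 ∧ (∀ k ∈ K, ω (A k) = 0) ∧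
          s = ‖LinearMap.toContinuousLinearMap (ω ∘ₗ A)‖ ^ 2} := by
  obtain ⟨w, hw⟩ := hpos
  refine Real.one_div_sInf_le_sInf_of_one_le_mul ⟨_, w, hw, rfl⟩ ?_ ?_ ?_
  · rintro e ⟨w, -, rfl⟩
    positivity
  · rintro s ⟨ω, -, -, rfl⟩
    positivity
  · rintro e ⟨w, hw, rfl⟩ s ⟨ω, hωτ, hωK, rfl⟩
    rw [← mul_pow]
    refine one_le_pow₀ ?_
    refine ContinuousLinearMap.one_le_norm_orthogonalProjectionOnto_mul_norm hωK ?_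
    simp [hw, hωτ]

/-- Span-program witness duality: the minimum positive-witness error
`min{‖Π_{K^⊥} ŵ‖² : A ŵ = τ}` is at least the reciprocal of the minimum negative-witness
size `min{‖ω∘A‖² : ω(τ) = 1, (ω∘A)|_K = 0}`. -/
theorem stmt7 {H V : Type*} [NormedAddCommGroup H] [InnerProductSpace ℝ H]
    [FiniteDimensional ℝ H] [NormedAddCommGroup V] [InnerProductSpace ℝ V]
    [FiniteDimensional ℝ V]
    (A : H →ₗ[ℝ] V) (τ : V) (K : Submodule ℝ H)
    (hpos : ∃ w : H, A w = τ)
    (hneg : ∃ ω : V →ₗ[ℝ] ℝ, ω τ = 1 ∧ ∀ k ∈ K, ω (A k) = 0) :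
    sInf {e : ℝ | ∃ w : H, A w = τ ∧ e = ‖(Submodule.orthogonalProjectionOnto Kᗮ w : H)‖ ^ 2}
      ≥ 1 / sInf {s : ℝ | ∃ ω : V →ₗ[ℝ] ℝ, ω τ = 1 ∧ (∀ k ∈ K, ω (A k) = 0) ∧
          s = ‖LinearMap.toContinuousLinearMap (ω ∘ₗ A)‖ ^ 2} :=
  stmt7_general A τ K hpos
end

section
/- Let f : {0,1}^m → {−1,+1} and suppose α₁, …, α_ℓ are partial assignments (certificates) of size at most C on coordinate sets S₁,…,S_ℓ ⊆ [m], such that every z ∈ {0,1}^m satisfies at least one α_i, and whenever z satisfies α_i then f(z) = v_i for a fixed value v_i ∈ {−1,+1}. For any positive integer λ, define the (m, λ, f)-pattern matrix F and the rectangles X_{i,k,b}, Y_{i,k,b} for i ∈ [ℓ], k ∈ [λ]^{S_i}, b ∈ {0,1}^{S_i} as in the construction. Then each restriction F ∘ Δ_{i,k,b} (F zeroed outside Y_{i,k,b} × X_{i,k,b}) has rank exactly 1 if the rectangle is nonempty (every entry in the rectangle equals v_i), and the rectangles cover all of {0,1}^{λm} × ([λ]^m × {0,1}^m). -/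
/-!
Inside the rectangle `Y_{i,k,b} × X_{i,k,b}` the bits `x_j = k_j` and `w_j = b_j` are pinned on
`S_i`, so `y|_x ⊕ w` agrees with `α_i` on `S_i` and the certificate forces `F = v_i` there.
Hence `F ∘ Δ_{i,k,b}` is the outer product of `v_i · 1_Y` and `1_X`, of rank one as soon as the
rectangle is nonempty (since `v_i = ±1 ≠ 0`). Conversely, `(y, (x, w))` lies in the rectangle of
any certificate `i` satisfied by `y|_x ⊕ w`, with `k = x` and `b = w`.
-/

namespace Matrix

variable {m n R : Type*} [Fintype n] [Field R]

theorem one_le_rank_of_apply_ne_zero {A : Matrix m n R} {i : m} {j : n} (h : A i j ≠ 0) :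
    1 ≤ A.rank := by
  have hsub : (A.submatrix (fun _ : Unit => i) fun _ : Unit => j).rank = 1 :=
    rank_of_det_ne_zero (by simpa [det_unique] using h)
  exact hsub ▸ rank_submatrix_le A _ _

theorem rank_hadamard_rectangle_eq_one (F : Matrix m n R) (p : m → Prop) (q : n → Prop)
    [DecidablePred p] [DecidablePred q] {a : R} (ha : a ≠ 0)
    (hF : ∀ y x, p y → q x → F y x = a) {y₀ : m} {x₀ : n} (hy₀ : p y₀) (hx₀ : q x₀) :
    (F ⊙ of fun y x => if p y ∧ q x then (1 : R) else 0).rank = 1 := by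
  have houter : (F ⊙ of fun y x => if p y ∧ q x then (1 : R) else 0) =
      vecMulVec (fun y => if p y then a else 0) fun x => if q x then 1 else 0 := by
    ext y x
    by_cases hy : p y <;> by_cases hx : q x <;> simp [vecMulVec_apply, hy, hx, hF]
  rw [houter]
  refine le_antisymm (rank_vecMulVec_le _ _) (one_le_rank_of_apply_ne_zero (i := y₀) (j := x₀) ?_)
  simpa [vecMulVec_apply, hy₀, hx₀] using ha

end Matrix

section PatternMatrix

variable {ι κ : Type*} {S : Finset ι} {α : ι → Bool} {y : ι → κ → Bool} {x : ι → κ}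
  {w : ι → Bool}

theorem patternInput_eq_of_mem_rectangle {k : ι → κ} {b : ι → Bool}
    (hy : ∀ j ∈ S, y j (k j) = xor (b j) (α j)) (hxw : ∀ j ∈ S, x j = k j ∧ w j = b j) :
    ∀ j ∈ S, xor (y j (x j)) (w j) = α j := by
  intro j hj
  rw [(hxw j hj).1, (hxw j hj).2, hy j hj, Bool.xor_right_comm, Bool.xor_self, Bool.false_xor]

theorem mem_rectangle_self_of_patternInput_eq (h : ∀ j ∈ S, xor (y j (x j)) (w j) = α j) :
    ∀ j ∈ S, y j (x j) = xor (w j) (α j) := by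
  intro j hj
  rw [← h j hj, Bool.xor_comm (y j (x j)), ← Bool.xor_assoc, Bool.xor_self, Bool.false_xor]

end PatternMatrix

theorem stmt9_general (m lam ℓ : ℕ)
    (f : (Fin m → Bool) → ℝ) (hf : ∀ z, f z = 1 ∨ f z = -1)
    (S : Fin ℓ → Finset (Fin m))
    (α : Fin ℓ → Fin m → Bool) (v : Fin ℓ → ℝ)
    (hcover : ∀ z : Fin m → Bool, ∃ i, ∀ j ∈ S i, z j = α i j)
    (hcert : ∀ i (z : Fin m → Bool), (∀ j ∈ S i, z j = α i j) → f z = v i)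
    (F : Matrix (Fin m → Fin lam → Bool) ((Fin m → Fin lam) × (Fin m → Bool)) ℝ)
    (hF : ∀ y xw, F y xw = f (fun j => xor (y j (xw.1 j)) (xw.2 j)))
    (Δ : Fin ℓ → (Fin m → Fin lam) → (Fin m → Bool) →
      Matrix (Fin m → Fin lam → Bool) ((Fin m → Fin lam) × (Fin m → Bool)) ℝ)
    (hΔ : ∀ i k b y xw, Δ i k b y xw =
      if (∀ j ∈ S i, y j (k j) = xor (b j) (α i j)) ∧
         (∀ j ∈ S i, xw.1 j = k j ∧ xw.2 j = b j) then 1 else 0) :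
    -- the rectangles cover all of {0,1}^{λm} × ([λ]^m × {0,1}^m)
    (∀ (y : Fin m → Fin lam → Bool) (x : Fin m → Fin lam) (w : Fin m → Bool),
      ∃ (i : Fin ℓ) (k : Fin m → Fin lam) (b : Fin m → Bool),
        (∀ j ∈ S i, y j (k j) = xor (b j) (α i j)) ∧
        (∀ j ∈ S i, x j = k j ∧ w j = b j)) ∧
    -- inside the rectangle for certificate i, every entry of F equals v i
    (∀ (i : Fin ℓ) (k : Fin m → Fin lam) (b : Fin m → Bool)
        (y : Fin m → Fin lam → Bool) (xw : (Fin m → Fin lam) × (Fin m → Bool)),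
      (∀ j ∈ S i, y j (k j) = xor (b j) (α i j)) →
      (∀ j ∈ S i, xw.1 j = k j ∧ xw.2 j = b j) →
      F y xw = v i) ∧
    -- if the rectangle is nonempty, the restriction F ∘ Δ has rank exactly 1
    (∀ (i : Fin ℓ) (k : Fin m → Fin lam) (b : Fin m → Bool),
      (∃ (y : Fin m → Fin lam → Bool) (xw : (Fin m → Fin lam) × (Fin m → Bool)),
          (∀ j ∈ S i, y j (k j) = xor (b j) (α i j)) ∧
          (∀ j ∈ S i, xw.1 j = k j ∧ xw.2 j = b j)) →
      (Matrix.hadamard F (Δ i k b)).rank = 1) := by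
  have hentry : ∀ (i : Fin ℓ) (k : Fin m → Fin lam) (b : Fin m → Bool) (y : Fin m → Fin lam → Bool)
      (xw : (Fin m → Fin lam) × (Fin m → Bool)),
      (∀ j ∈ S i, y j (k j) = xor (b j) (α i j)) →
      (∀ j ∈ S i, xw.1 j = k j ∧ xw.2 j = b j) → F y xw = v i := fun i _ _ y xw hY hX =>
    (hF y xw).trans (hcert i _ (patternInput_eq_of_mem_rectangle hY hX))
  refine ⟨fun y x w => ?_, hentry, fun i k b ⟨y₀, xw₀, hY₀, hX₀⟩ => ?_⟩
  · obtain ⟨i, hi⟩ := hcover fun j => xor (y j (x j)) (w j)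
    exact ⟨i, x, w, mem_rectangle_self_of_patternInput_eq hi, fun _ _ => ⟨rfl, rfl⟩⟩
  · have hv : v i ≠ 0 := by
      rw [← hentry i k b y₀ xw₀ hY₀ hX₀, hF]
      rcases hf (fun j => xor (y₀ j (xw₀.1 j)) (xw₀.2 j)) with h | h <;> norm_num [h]
    rw [show Δ i k b = Matrix.of _ from Matrix.ext (hΔ i k b)]
    exact Matrix.rank_hadamard_rectangle_eq_one F _ _ hv (hentry i k b) hY₀ hX₀

/-- Rectangle cover of the pattern matrix obtained from certificates: the rectangles
`X_{i,k,b} × Y_{i,k,b}` cover everything, every entry of `F` inside a rectangle for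
certificate `i` equals `v_i`, and each restriction `F ∘ Δ_{i,k,b}` has rank exactly `1`
when the rectangle is nonempty. -/
theorem stmt9 (m lam ℓ C : ℕ) (hlam : 0 < lam)
    (f : (Fin m → Bool) → ℝ) (hf : ∀ z, f z = 1 ∨ f z = -1)
    (S : Fin ℓ → Finset (Fin m)) (hS : ∀ i, (S i).card ≤ C)
    (α : Fin ℓ → Fin m → Bool) (v : Fin ℓ → ℝ)
    (hcover : ∀ z : Fin m → Bool, ∃ i, ∀ j ∈ S i, z j = α i j)
    (hcert : ∀ i (z : Fin m → Bool), (∀ j ∈ S i, z j = α i j) → f z = v i)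
    (F : Matrix (Fin m → Fin lam → Bool) ((Fin m → Fin lam) × (Fin m → Bool)) ℝ)
    (hF : ∀ y xw, F y xw = f (fun j => xor (y j (xw.1 j)) (xw.2 j)))
    (Δ : Fin ℓ → (Fin m → Fin lam) → (Fin m → Bool) →
      Matrix (Fin m → Fin lam → Bool) ((Fin m → Fin lam) × (Fin m → Bool)) ℝ)
    (hΔ : ∀ i k b y xw, Δ i k b y xw =
      if (∀ j ∈ S i, y j (k j) = xor (b j) (α i j)) ∧
         (∀ j ∈ S i, xw.1 j = k j ∧ xw.2 j = b j) then 1 else 0) :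
    -- the rectangles cover all of {0,1}^{λm} × ([λ]^m × {0,1}^m)
    (∀ (y : Fin m → Fin lam → Bool) (x : Fin m → Fin lam) (w : Fin m → Bool),
      ∃ (i : Fin ℓ) (k : Fin m → Fin lam) (b : Fin m → Bool),
        (∀ j ∈ S i, y j (k j) = xor (b j) (α i j)) ∧
        (∀ j ∈ S i, x j = k j ∧ w j = b j)) ∧
    -- inside the rectangle for certificate i, every entry of F equals v i
    (∀ (i : Fin ℓ) (k : Fin m → Fin lam) (b : Fin m → Bool)
        (y : Fin m → Fin lam → Bool) (xw : (Fin m → Fin lam) × (Fin m → Bool)),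
      (∀ j ∈ S i, y j (k j) = xor (b j) (α i j)) →
      (∀ j ∈ S i, xw.1 j = k j ∧ xw.2 j = b j) →
      F y xw = v i) ∧
    -- if the rectangle is nonempty, the restriction F ∘ Δ has rank exactly 1
    (∀ (i : Fin ℓ) (k : Fin m → Fin lam) (b : Fin m → Bool),
      (∃ (y : Fin m → Fin lam → Bool) (xw : (Fin m → Fin lam) × (Fin m → Bool)),
          (∀ j ∈ S i, y j (k j) = xor (b j) (α i j)) ∧
          (∀ j ∈ S i, xw.1 j = k j ∧ xw.2 j = b j)) →
      (Matrix.hadamard F (Δ i k b)).rank = 1) :=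
  stmt9_general m lam ℓ f hf S α v hcover hcert F hF Δ hΔ
end

section
/- Let P = (H, V, τ, A) be a span program over ℂ with H = span_ℂ{e_k}. Construct a real span program P' with H' = span_ℝ{e_{k,0}, e_{k,1}}, A' e_{k,0} = Re(A e_k) ⊗ |0⟩ + Im(A e_k) ⊗ |1⟩, A' e_{k,1} = Re(A e_k) ⊗ |1⟩ − Im(A e_k) ⊗ |0⟩, and target τ' = τ ⊗ |0⟩ (assuming τ real). Then for any complex vector w with A w = τ, the real vector w' = Re(w) ⊗ |0⟩ + Im(w) ⊗ |1⟩ satisfies A' w' = τ' and ‖w'‖ = ‖w‖. -/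
/-!
The map `realify : v ↦ Re v ⊗ |0⟩ + Im v ⊗ |1⟩` is an `ℝ`-linear isometry `ℂ^K → ℝ^(K × 2)`.
The columns of `A'` are `A' e_{k,0} = realify (A e_k)` and `A' e_{k,1} = realify (i A e_k)`, while
`e_{k,0} = realify e_k` and `e_{k,1} = realify (i e_k)`. Hence `A' ∘ realify = realify ∘ A` on the
`ℝ`-basis `{e_k, i e_k}` of `ℂ^K`, so everywhere; as `w' = realify w`, this gives
`A' w' = realify τ = τ ⊗ |0⟩` for real `τ`.
-/

open Complex

lemma EuclideanSpace.smul_single_one {𝕜 ι : Type*} [RCLike 𝕜] [DecidableEq ι] (a : 𝕜) (i : ι) :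
    a • EuclideanSpace.single i (1 : 𝕜) = EuclideanSpace.single i a := by
  ext j
  by_cases h : j = i <;> simp [h]

section Realify

variable {ι : Type*}

def realify : EuclideanSpace ℂ ι →ₗ[ℝ] EuclideanSpace ℝ (ι × Fin 2) where
  toFun v := WithLp.toLp 2 fun p => ![(v p.1).re, (v p.1).im] p.2
  map_add' v w := by
    ext ⟨i, c⟩
    fin_cases c <;> simp
  map_smul' r v := by
    ext ⟨i, c⟩
    fin_cases c <;> simp

@[simp]
lemma realify_apply_zero (v : EuclideanSpace ℂ ι) (i : ι) : realify v (i, 0) = (v i).re := rfl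

@[simp]
lemma realify_apply_one (v : EuclideanSpace ℂ ι) (i : ι) : realify v (i, 1) = (v i).im := rfl

lemma norm_realify [Fintype ι] (v : EuclideanSpace ℂ ι) : ‖realify v‖ = ‖v‖ := by
  rw [EuclideanSpace.norm_eq, EuclideanSpace.norm_eq, Fintype.sum_prod_type]
  congr 1
  refine Finset.sum_congr rfl fun i _ => ?_
  rw [Fin.sum_univ_two, realify_apply_zero, realify_apply_one, Real.norm_eq_abs, Real.norm_eq_abs,
    sq_abs, sq_abs, Complex.sq_norm, normSq_apply, sq, sq]

lemma toLp_re_im_eq_realify (v : EuclideanSpace ℂ ι) :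
    (WithLp.equiv 2 (ι × Fin 2 → ℝ)).symm
        (fun p => if p.2 = 0 then (v p.1).re else (v p.1).im) = realify v := by
  ext ⟨i, c⟩
  fin_cases c <;> simp

lemma toLp_neg_im_re_eq_realify_I_smul (v : EuclideanSpace ℂ ι) :
    (WithLp.equiv 2 (ι × Fin 2 → ℝ)).symm
        (fun p => if p.2 = 1 then (v p.1).re else -(v p.1).im) = realify (I • v) := by
  ext ⟨i, c⟩
  fin_cases c <;> simp

variable [DecidableEq ι]

lemma realify_single_one (i : ι) :
    realify (EuclideanSpace.single i (1 : ℂ)) = EuclideanSpace.single (i, 0) 1 := by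
  ext ⟨j, c⟩
  fin_cases c <;> by_cases h : j = i <;> simp [h]

lemma realify_single_I (i : ι) :
    realify (EuclideanSpace.single i I) = EuclideanSpace.single (i, 1) 1 := by
  ext ⟨j, c⟩
  fin_cases c <;> by_cases h : j = i <;> simp [h]

end Realify

lemma EuclideanSpace.realLinearMap_ext {ι M : Type*} [Fintype ι] [DecidableEq ι]
    [AddCommGroup M] [Module ℝ M]
    {f g : EuclideanSpace ℂ ι →ₗ[ℝ] M}
    (h1 : ∀ i, f (EuclideanSpace.single i 1) = g (EuclideanSpace.single i 1))
    (hI : ∀ i, f (EuclideanSpace.single i I) = g (EuclideanSpace.single i I)) : f = g := by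
  refine (basisOneI.smulTower (EuclideanSpace.basisFun ι ℂ).toBasis).ext fun ⟨c, i⟩ => ?_
  fin_cases c
  · simpa using h1 i
  · simpa [EuclideanSpace.smul_single_one] using hI i

/-- A complex span program can be realized over ℝ: if `A' e_{k,0} = Re(Ae_k)⊗|0⟩ + Im(Ae_k)⊗|1⟩`,
`A' e_{k,1} = Re(Ae_k)⊗|1⟩ − Im(Ae_k)⊗|0⟩`, `τ` has real coordinates, and
`w' = Re(w)⊗|0⟩ + Im(w)⊗|1⟩` for a complex witness `w` with `A w = τ`, then
`A' w' = τ ⊗ |0⟩` and `‖w'‖ = ‖w‖`. -/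
theorem stmt10 (K d : ℕ)
    (A : EuclideanSpace ℂ (Fin K) →ₗ[ℂ] EuclideanSpace ℂ (Fin d))
    (τ : EuclideanSpace ℂ (Fin d)) (hτ : ∀ j, (τ j).im = 0)
    (A' : EuclideanSpace ℝ (Fin K × Fin 2) →ₗ[ℝ] EuclideanSpace ℝ (Fin d × Fin 2))
    (hA'0 : ∀ k : Fin K, A' (EuclideanSpace.single (k, 0) 1) =
      (WithLp.equiv 2 (Fin d × Fin 2 → ℝ)).symm (fun p =>
        if p.2 = 0 then (A (EuclideanSpace.single k 1) p.1).re
        else (A (EuclideanSpace.single k 1) p.1).im))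
    (hA'1 : ∀ k : Fin K, A' (EuclideanSpace.single (k, 1) 1) =
      (WithLp.equiv 2 (Fin d × Fin 2 → ℝ)).symm (fun p =>
        if p.2 = 1 then (A (EuclideanSpace.single k 1) p.1).re
        else -(A (EuclideanSpace.single k 1) p.1).im))
    (w : EuclideanSpace ℂ (Fin K)) (hw : A w = τ)
    (w' : EuclideanSpace ℝ (Fin K × Fin 2))
    (hw' : ∀ k : Fin K, w' (k, 0) = (w k).re ∧ w' (k, 1) = (w k).im) :
    A' w' = (WithLp.equiv 2 (Fin d × Fin 2 → ℝ)).symm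
        (fun p => if p.2 = 0 then (τ p.1).re else 0) ∧
    ‖w'‖ = ‖w‖ := by
  have hw'_eq : w' = realify w := by
    ext ⟨k, c⟩
    fin_cases c
    exacts [(hw' k).1, (hw' k).2]
  have hA'_realify : A'.comp realify = realify.comp (A.restrictScalars ℝ) := by
    refine EuclideanSpace.realLinearMap_ext (fun k => ?_) (fun k => ?_)
    · simp [realify_single_one, hA'0, toLp_re_im_eq_realify]
    · have hAI : A (EuclideanSpace.single k I) = I • A (EuclideanSpace.single k 1) := by
        rw [← map_smul, EuclideanSpace.smul_single_one]
      simp [realify_single_I, hA'1, toLp_neg_im_re_eq_realify_I_smul, hAI]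
  refine ⟨?_, hw'_eq ▸ norm_realify w⟩
  rw [hw'_eq, ← LinearMap.comp_apply, hA'_realify, LinearMap.comp_apply,
    LinearMap.restrictScalars_apply, hw]
  ext ⟨j, c⟩
  fin_cases c <;> simp [hτ]
end

section
/- Let F be the (m, λ, p)-pattern matrix of a function p : {0,1}^m → ℝ. Then rank(F) = Σ_{S ⊆ [m] : p̂(S) ≠ 0} λ^{|S|}, where p̂(S) are the Fourier coefficients of p. -/
/-!
Expanding `p` in Walsh characters gives
`F[y, (x, w)] = ∑_S p̂(S) χ_S(w) χ_{G(S,x)}(y)`, where `G(S,x) = {(j, x j) | j ∈ S}` and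
`χ_A(y) = ∏_{(j,k) ∈ A} (-1)^{y j k}` is a Walsh character of the cube `{0,1}^{m × λ}`.
So the column space lies in the span of the `χ_{G(S,x)}` with `p̂(S) ≠ 0`; conversely, averaging
the columns `(x, ·)` against `χ_S` isolates `2^m p̂(S) χ_{G(S,x)}`, so each of these characters is a
column combination. Distinct Walsh characters are orthogonal, hence independent; a graph `G(S,x)`
determines `S`, and each `S` has exactly `λ^{|S|}` of them.
-/

open Finset

namespace PatternMatrix

noncomputable def boolSign (b : Bool) : ℝ := if b then -1 else 1

lemma boolSign_xor (a b : Bool) : boolSign (xor a b) = boolSign a * boolSign b := by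
  cases a <;> cases b <;> norm_num [boolSign]

section Walsh

variable {ι : Type*}

noncomputable def walsh (S : Finset ι) (z : ι → Bool) : ℝ := ∏ i ∈ S, boolSign (z i)

lemma walsh_eq_neg_one_pow (S : Finset ι) (z : ι → Bool) :
    walsh S z = (-1) ^ #{i ∈ S | z i = true} := by
  rw [← prod_const, prod_filter, walsh]
  refine prod_congr rfl fun i _ => ?_
  cases z i <;> simp [boolSign]

lemma walsh_xor (S : Finset ι) (u w : ι → Bool) :
    walsh S (fun i => xor (u i) (w i)) = walsh S u * walsh S w := by
  simp only [walsh, boolSign_xor, prod_mul_distrib]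

variable [Fintype ι]

lemma sum_walsh_mul_walsh_right (z z' : ι → Bool) :
    ∑ S : Finset ι, walsh S z * walsh S z' = if z = z' then 2 ^ Fintype.card ι else 0 := by
  have hfactor : ∀ i, 1 + boolSign (z i) * boolSign (z' i) = if z i = z' i then 2 else 0 := by
    intro i
    cases z i <;> cases z' i <;> norm_num [boolSign]
  simp_rw [walsh, ← prod_mul_distrib, ← powerset_univ, ← prod_one_add, hfactor,
    Fintype.prod_ite_zero, prod_const, card_univ, funext_iff]

variable [DecidableEq ι]

lemma sum_walsh_mul_walsh (A B : Finset ι) :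
    ∑ z : ι → Bool, walsh A z * walsh B z = if A = B then 2 ^ Fintype.card ι else 0 := by
  have hfactor : ∀ i, ∑ b : Bool, (if i ∈ A then boolSign b else 1) *
      (if i ∈ B then boolSign b else 1) = if (i ∈ A ↔ i ∈ B) then 2 else 0 := by
    intro i
    by_cases hA : i ∈ A <;> by_cases hB : i ∈ B <;> norm_num [hA, hB, boolSign]
  have hwalsh : ∀ (S : Finset ι) z, walsh S z = ∏ i, if i ∈ S then boolSign (z i) else 1 :=
    fun S z => (prod_ite_mem_eq S _).symm
  simp_rw [hwalsh, ← prod_mul_distrib]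
  rw [← Fintype.prod_sum fun i (b : Bool) =>
    (if i ∈ A then boolSign b else 1) * (if i ∈ B then boolSign b else 1)]
  simp_rw [hfactor, Fintype.prod_ite_zero, prod_const, card_univ, ← Finset.ext_iff]

lemma linearIndependent_walsh : LinearIndependent ℝ (walsh : Finset ι → (ι → Bool) → ℝ) := by
  refine LinearMap.BilinForm.linearIndependent_of_iIsOrtho (B := dotProductBilin ℝ ℝ)
    (fun A B hAB => ?_) (fun A => ?_)
  · simp [Function.onFun, dotProduct, sum_walsh_mul_walsh, hAB]
  · simp [dotProduct, sum_walsh_mul_walsh]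

noncomputable def fourierCoeff (p : (ι → Bool) → ℝ) (S : Finset ι) : ℝ :=
  1 / 2 ^ Fintype.card ι * ∑ z, p z * walsh S z

lemma sum_fourierCoeff_mul_walsh (p : (ι → Bool) → ℝ) (z : ι → Bool) :
    ∑ S, fourierCoeff p S * walsh S z = p z := by
  calc ∑ S, fourierCoeff p S * walsh S z
      = 1 / 2 ^ Fintype.card ι * ∑ z', p z' * ∑ S, walsh S z' * walsh S z := by
        simp only [fourierCoeff, mul_sum, sum_mul, mul_assoc]
        exact sum_comm
    _ = p z := by
        simp only [sum_walsh_mul_walsh_right, mul_ite, mul_zero, sum_ite_eq', mem_univ,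
          if_true]
        field_simp

lemma sum_walsh_mul_xor (p : (ι → Bool) → ℝ) (S : Finset ι) (u : ι → Bool) :
    ∑ w, walsh S w * p (fun i => xor (u i) (w i)) =
      2 ^ Fintype.card ι * fourierCoeff p S * walsh S u := by
  let shift : (ι → Bool) → ι → Bool := fun w i => xor (u i) (w i)
  have hshift : Function.Involutive shift := fun w => funext fun i => Bool.bne_self_left _ _
  rw [← hshift.bijective.sum_comp fun w => walsh S w * p (shift w), fourierCoeff, ← mul_assoc,
    mul_one_div_cancel (by positivity), one_mul, sum_mul]
  refine sum_congr rfl fun v _ => ?_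
  rw [hshift v, walsh_xor]
  ring

end Walsh

section Pattern

variable {ι κ : Type*} [DecidableEq ι] [DecidableEq κ]

noncomputable def graphOn (S : Finset ι) (x : ι → κ) : Finset (ι × κ) := S.image fun i => (i, x i)

lemma graphOn_eq_graphOn_iff {S : Finset ι} {x x' : ι → κ} :
    graphOn S x = graphOn S x' ↔ ∀ i ∈ S, x i = x' i := by
  refine ⟨fun h i hi => ?_, fun h => image_congr fun i hi => by rw [h i hi]⟩
  have hmem : (i, x i) ∈ graphOn S x' := h ▸ mem_image_of_mem _ hi
  obtain ⟨j, -, hj⟩ := mem_image.mp hmem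
  obtain ⟨rfl, hx⟩ := Prod.mk.inj hj
  exact hx.symm

lemma image_fst_graphOn (S : Finset ι) (x : ι → κ) : (graphOn S x).image Prod.fst = S := by
  rw [graphOn, image_image]
  exact image_id'

lemma walsh_graphOn (S : Finset ι) (x : ι → κ) (y : ι → κ → Bool) :
    walsh (graphOn S x) (Function.uncurry y) = walsh S fun i => y i (x i) :=
  prod_image fun _ _ _ _ h => (Prod.mk.inj h).1

noncomputable def blockWalsh (A : Finset (ι × κ)) (y : ι → κ → Bool) : ℝ :=
  walsh A (Function.uncurry y)

noncomputable def patternMatrix (p : (ι → Bool) → ℝ) :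
    Matrix (ι → κ → Bool) ((ι → κ) × (ι → Bool)) ℝ :=
  Matrix.of fun y xw => p fun i => xor (y i (xw.1 i)) (xw.2 i)

variable [Fintype ι]

lemma col_patternMatrix_eq_sum (p : (ι → Bool) → ℝ) (x : ι → κ) (w : ι → Bool) :
    (patternMatrix p).col (x, w) =
      ∑ S, (fourierCoeff p S * walsh S w) • blockWalsh (graphOn S x) := by
  funext y
  rw [Matrix.col_apply, patternMatrix, Matrix.of_apply, ← sum_fourierCoeff_mul_walsh p,
    Finset.sum_apply]
  simp only [Pi.smul_apply, smul_eq_mul, blockWalsh, walsh_graphOn, walsh_xor]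
  exact sum_congr rfl fun S _ => by ring

lemma sum_walsh_smul_col_patternMatrix (p : (ι → Bool) → ℝ) (S : Finset ι) (x : ι → κ) :
    ∑ w, walsh S w • (patternMatrix p).col (x, w) =
      (2 ^ Fintype.card ι * fourierCoeff p S) • blockWalsh (graphOn S x) := by
  funext y
  simp only [Finset.sum_apply, Pi.smul_apply, smul_eq_mul, Matrix.col_apply, patternMatrix,
    Matrix.of_apply, sum_walsh_mul_xor, blockWalsh, walsh_graphOn]

variable [Fintype κ]

lemma linearIndependent_blockWalsh :
    LinearIndependent ℝ (blockWalsh : Finset (ι × κ) → (ι → κ → Bool) → ℝ) :=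
  linearIndependent_walsh.map' (LinearMap.funLeft ℝ ℝ Function.uncurry) <|
    LinearMap.ker_eq_bot.mpr <| LinearMap.funLeft_injective_of_surjective _ _ _
      (Equiv.curry ι κ Bool).symm.surjective

lemma card_image_graphOn [Nonempty κ] (S : Finset ι) :
    #(univ.image (graphOn S : (ι → κ) → Finset (ι × κ))) = Fintype.card κ ^ #S := by
  let k₀ : κ := Classical.arbitrary κ
  let slices : ∀ _ : ι, Finset κ := fun i => if i ∈ S then univ else {k₀}
  have himage : univ.image (graphOn S : (ι → κ) → Finset (ι × κ)) =
      (Fintype.piFinset slices).image (graphOn S) := by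
    refine (image_subset_image (subset_univ _)).antisymm' fun A hA => ?_
    obtain ⟨x, -, rfl⟩ := mem_image.mp hA
    refine mem_image.mpr ⟨fun i => if i ∈ S then x i else k₀, ?_, ?_⟩
    · simp only [Fintype.mem_piFinset, slices]
      intro i; split_ifs <;> simp
    · exact graphOn_eq_graphOn_iff.mpr fun i hi => if_pos hi
  have hinj : Set.InjOn (graphOn S) (Fintype.piFinset slices : Set (ι → κ)) := by
    intro x hx x' hx' h
    funext i
    by_cases hi : i ∈ S
    · exact graphOn_eq_graphOn_iff.mp h i hi
    · have hx := Fintype.mem_piFinset.mp hx i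
      have hx' := Fintype.mem_piFinset.mp hx' i
      simp only [slices, if_neg hi, mem_singleton] at hx hx'
      rw [hx, hx']
  rw [himage, card_image_of_injOn hinj, Fintype.card_piFinset]
  simp [slices, apply_ite]

noncomputable def spectralSets (p : (ι → Bool) → ℝ) : Finset (Finset (ι × κ)) :=
  ({S | fourierCoeff p S ≠ 0} : Finset (Finset ι)).biUnion fun S => univ.image (graphOn S)

lemma mem_spectralSets {p : (ι → Bool) → ℝ} {A : Finset (ι × κ)} :
    A ∈ spectralSets p ↔ ∃ S, fourierCoeff p S ≠ 0 ∧ ∃ x, graphOn S x = A := by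
  simp [spectralSets]

lemma span_range_col_patternMatrix (p : (ι → Bool) → ℝ) :
    Submodule.span ℝ (Set.range (patternMatrix (κ := κ) p).col) =
      Submodule.span ℝ (blockWalsh '' ↑(spectralSets (κ := κ) p)) := by
  refine Submodule.span_eq_span ?_ ?_
  · rintro _ ⟨⟨x, w⟩, rfl⟩
    rw [col_patternMatrix_eq_sum]
    refine Submodule.sum_mem _ fun S _ => ?_
    by_cases hS : fourierCoeff p S = 0
    · simp [hS]
    · exact Submodule.smul_mem _ _ <| Submodule.subset_span
        ⟨graphOn S x, mem_spectralSets.mpr ⟨S, hS, x, rfl⟩, rfl⟩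
  · rintro _ ⟨A, hA, rfl⟩
    obtain ⟨S, hS, x, rfl⟩ := mem_spectralSets.mp hA
    have hscale : (2 ^ Fintype.card ι * fourierCoeff p S : ℝ) ≠ 0 := by positivity
    rw [← inv_smul_smul₀ hscale (blockWalsh (graphOn S x)),
      ← sum_walsh_smul_col_patternMatrix]
    exact Submodule.smul_mem _ _ <| Submodule.sum_mem _ fun w _ =>
      Submodule.smul_mem _ _ <| Submodule.subset_span ⟨(x, w), rfl⟩

lemma card_spectralSets [Nonempty κ] (p : (ι → Bool) → ℝ) :
    #(spectralSets (κ := κ) p) = ∑ S with fourierCoeff p S ≠ 0, Fintype.card κ ^ #S := by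
  rw [spectralSets, card_biUnion]
  · exact sum_congr rfl fun S _ => card_image_graphOn S
  · intro S _ T _ hST
    refine disjoint_left.mpr fun A hAS hAT => hST ?_
    obtain ⟨x, -, rfl⟩ := mem_image.mp hAS
    obtain ⟨x', -, hx'⟩ := mem_image.mp hAT
    rw [← image_fst_graphOn S x, ← hx', image_fst_graphOn]

theorem rank_patternMatrix [Nonempty κ] (p : (ι → Bool) → ℝ) :
    (patternMatrix (κ := κ) p).rank = ∑ S with fourierCoeff p S ≠ 0, Fintype.card κ ^ #S := by
  rw [Matrix.rank_eq_finrank_span_cols, span_range_col_patternMatrix, Set.image_eq_range,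
    ← card_spectralSets]
  exact (finrank_span_eq_card (linearIndependent_blockWalsh.comp _ Subtype.val_injective)).trans
    (Fintype.card_coe _)

end Pattern

end PatternMatrix

open PatternMatrix in
/-- The rank of the `(m, λ, p)`-pattern matrix equals `Σ_{S : p̂(S) ≠ 0} λ^{|S|}`, where
`p̂(S) = 2^{−m} Σ_z p(z) χ_S(z)` are the Fourier coefficients of `p`. -/
theorem stmt15 (m lam : ℕ) (hlam : 0 < lam) (p : (Fin m → Bool) → ℝ)
    (F : Matrix (Fin m → Fin lam → Bool) ((Fin m → Fin lam) × (Fin m → Bool)) ℝ)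
    (hF : ∀ y xw, F y xw = p (fun j => xor (y j (xw.1 j)) (xw.2 j))) :
    F.rank = ∑ S ∈ Finset.univ.filter (fun S : Finset (Fin m) =>
        ((1 : ℝ) / 2 ^ m) * ∑ z : Fin m → Bool,
          p z * (-1 : ℝ) ^ (S.filter (fun i => z i = true)).card ≠ 0),
      lam ^ S.card := by
  have : Nonempty (Fin lam) := Fin.pos_iff_nonempty.mp hlam
  obtain rfl : F = patternMatrix p := Matrix.ext hF
  rw [rank_patternMatrix]
  simp only [Fintype.card_fin, PatternMatrix.fourierCoeff, walsh_eq_neg_one_pow]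
end

section
/- Let U = Σ_j e^{iθ_j}|λ_j⟩⟨λ_j| be a unitary on a finite-dimensional complex Hilbert space with θ_j ∈ (−π, π], and let ψ be a unit vector. For a positive integer T, define p = Σ_j |⟨λ_j|ψ⟩|² · |Σ_{t=0}^{T−1} e^{itθ_j}|²/T². Then for any Θ ∈ (0, π], p ≤ ‖Π_Θ ψ‖² + π²/(T²Θ²), where Π_Θ projects onto eigenvectors with |θ_j| ≤ Θ. -/
/-!
Expanding `ψ` in the eigenbasis, `p` is an average of the normalized Fejér kernel
`|Σ_{t<T} e^{itθ_j}|² / T²` against the weights `|⟨λ_j|ψ⟩|²`, which sum to `‖ψ‖² = 1`.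
The kernel is at most `1` everywhere, which bounds the contribution of the phases with
`|θ_j| ≤ Θ` by `‖Π_Θ ψ‖²`. For the other phases the geometric sum is at most
`2 / |e^{iθ} - 1| = 1 / |sin (θ/2)| ≤ π / |θ| < π / Θ` by Jordan's inequality, so their
total contribution is at most `π² / (T²Θ²)`.
-/

open scoped ComplexInnerProductSpace

open Complex Finset

lemma Finset.sum_mul_le_sum_filter_add {ι : Type*} (s : Finset ι) (p : ι → Prop)
    [DecidablePred p] (w f : ι → ℝ) {ε : ℝ} (hw : ∀ i ∈ s, 0 ≤ w i)
    (hw_sum : ∑ i ∈ s, w i ≤ 1) (hf : ∀ i ∈ s, f i ≤ 1) (hfε : ∀ i ∈ s, ¬ p i → f i ≤ ε)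
    (hε : 0 ≤ ε) :
    ∑ i ∈ s, w i * f i ≤ ∑ i ∈ s.filter p, w i + ε := by
  rw [← sum_filter_add_sum_filter_not s p]
  gcongr ?_ + ?_
  · refine sum_le_sum fun i hi => ?_
    have hi := (mem_filter.1 hi).1
    exact mul_le_of_le_one_right (hw i hi) (hf i hi)
  · calc ∑ i ∈ s.filter (¬ p ·), w i * f i
        ≤ ∑ i ∈ s.filter (¬ p ·), w i * ε := by
          refine sum_le_sum fun i hi => ?_
          obtain ⟨hi, hpi⟩ := mem_filter.1 hi
          exact mul_le_mul_of_nonneg_left (hfε i hi hpi) (hw i hi)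
      _ = (∑ i ∈ s.filter (¬ p ·), w i) * ε := (sum_mul _ _ _).symm
      _ ≤ 1 * ε := by
          gcongr
          exact (sum_le_sum_of_subset_of_nonneg (filter_subset _ s)
            fun i hi _ => hw i hi).trans hw_sum
      _ = ε := one_mul ε

lemma norm_geom_sum_le_of_norm_eq_one {z : ℂ} (hz : ‖z‖ = 1) (hz1 : z ≠ 1) (T : ℕ) :
    ‖∑ t ∈ range T, z ^ t‖ ≤ 2 / ‖z - 1‖ := by
  rw [geom_sum_eq hz1, norm_div]
  gcongr
  calc ‖z ^ T - 1‖ ≤ ‖z ^ T‖ + ‖(1 : ℂ)‖ := norm_sub_le _ _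
    _ = 2 := by rw [norm_pow, hz]; norm_num

lemma two_mul_abs_div_pi_le_norm_exp_mul_I_sub_one {θ : ℝ} (hθ : |θ| ≤ Real.pi) :
    2 * |θ| / Real.pi ≤ ‖exp (θ * I) - 1‖ := by
  have hjordan := Real.mul_abs_le_abs_sin (x := θ / 2)
    (by rw [abs_div, abs_two]; linarith)
  rw [abs_div, abs_two] at hjordan
  rw [mul_comm (θ : ℂ) I, norm_exp_I_mul_ofReal_sub_one, norm_mul, Real.norm_eq_abs,
    Real.norm_eq_abs, abs_two]
  calc 2 * |θ| / Real.pi = 2 * (2 / Real.pi * (|θ| / 2)) := by ring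
    _ ≤ 2 * |Real.sin (θ / 2)| := by gcongr

lemma norm_sum_range_exp_mul_I_le (θ : ℝ) (T : ℕ) :
    ‖∑ t ∈ range T, exp (t * θ * I)‖ ≤ T := by
  calc ‖∑ t ∈ range T, exp (t * θ * I)‖ ≤ ∑ t ∈ range T, ‖exp (t * θ * I)‖ :=
        norm_sum_le _ _
    _ = T := by
        simp_rw [← ofReal_natCast, ← ofReal_mul, norm_exp_ofReal_mul_I, sum_const,
          card_range, nsmul_one]

lemma norm_sum_range_exp_mul_I_le_pi_div {θ : ℝ} (hθ0 : θ ≠ 0) (hθ : |θ| ≤ Real.pi)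
    (T : ℕ) : ‖∑ t ∈ range T, exp (t * θ * I)‖ ≤ Real.pi / |θ| := by
  have hchord := two_mul_abs_div_pi_le_norm_exp_mul_I_sub_one hθ
  have hpos : 0 < 2 * |θ| / Real.pi := by positivity
  have hne : exp (θ * I) ≠ 1 := by
    rintro h
    rw [h, sub_self, norm_zero] at hchord
    linarith
  have hgeom : ∑ t ∈ range T, exp (t * θ * I) = ∑ t ∈ range T, exp (θ * I) ^ t := by
    refine sum_congr rfl fun t _ => ?_
    rw [← exp_nat_mul, mul_assoc]
  rw [hgeom]
  calc ‖∑ t ∈ range T, exp (θ * I) ^ t‖ ≤ 2 / ‖exp (θ * I) - 1‖ :=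
        norm_geom_sum_le_of_norm_eq_one (norm_exp_ofReal_mul_I θ) hne T
    _ ≤ 2 / (2 * |θ| / Real.pi) := by gcongr
    _ = Real.pi / |θ| := by field_simp

lemma OrthonormalBasis.sum_normSq_inner_right {ι E : Type*} [Fintype ι]
    [NormedAddCommGroup E] [InnerProductSpace ℂ E] (b : OrthonormalBasis ι ℂ E) (x : E) :
    ∑ i, normSq ⟪b i, x⟫ = ‖x‖ ^ 2 := by
  simp_rw [normSq_eq_norm_sq, b.sum_sq_norm_inner_right]

theorem stmt17_general {H : Type*} [NormedAddCommGroup H] [InnerProductSpace ℂ H]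
    (n : ℕ) (lb : OrthonormalBasis (Fin n) ℂ H)
    (θ : Fin n → ℝ)
    (hθ : ∀ j, θ j ∈ Set.Ioc (-Real.pi) Real.pi)
    (ψ : H) (hψ : ‖ψ‖ = 1)
    (T : ℕ) (Θ : ℝ) (hΘ : 0 < Θ) :
    ∑ j, Complex.normSq ⟪lb j, ψ⟫ *
        (‖(∑ t ∈ Finset.range T,
          Complex.exp ((t : ℂ) * (θ j : ℂ) * Complex.I))‖) ^ 2 / (T : ℝ) ^ 2
      ≤ (∑ j ∈ Finset.univ.filter (fun j => |θ j| ≤ Θ), Complex.normSq ⟪lb j, ψ⟫)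
        + Real.pi ^ 2 / ((T : ℝ) ^ 2 * Θ ^ 2) := by
  simp_rw [mul_div_assoc]
  refine univ.sum_mul_le_sum_filter_add _ _ _ (fun j _ => normSq_nonneg _)
    (by rw [lb.sum_normSq_inner_right, hψ, one_pow]) (fun j _ => ?_) (fun j _ hj => ?_)
    (by positivity)
  · exact div_le_one_of_le₀ (pow_le_pow_left₀ (norm_nonneg _)
      (norm_sum_range_exp_mul_I_le _ T) 2) (by positivity)
  · have hθj : |θ j| ≤ Real.pi := abs_le.2 ⟨(hθ j).1.le, (hθ j).2⟩
    have hlt : Θ < |θ j| := lt_of_not_ge hj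
    have hsum := norm_sum_range_exp_mul_I_le_pi_div (abs_pos.1 (hΘ.trans hlt)) hθj T
    calc ‖∑ t ∈ range T, exp (t * θ j * I)‖ ^ 2 / (T : ℝ) ^ 2
        ≤ (Real.pi / Θ) ^ 2 / (T : ℝ) ^ 2 := by
          gcongr
          exact hsum.trans (div_le_div_of_nonneg_left Real.pi_pos.le hΘ hlt.le)
      _ = Real.pi ^ 2 / ((T : ℝ) ^ 2 * Θ ^ 2) := by rw [div_pow, div_div, mul_comm]

/-- Phase estimation error bound: for a unitary `U = Σ_j e^{iθ_j}|λ_j⟩⟨λ_j|` with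
eigenphases `θ_j ∈ (−π, π]`, a unit vector `ψ` and `T` steps of phase estimation, the
probability `p = Σ_j |⟨λ_j|ψ⟩|²·|Σ_{t<T} e^{itθ_j}|²/T²` of outcome `0` satisfies
`p ≤ ‖Π_Θ ψ‖² + π²/(T²Θ²)`, where `‖Π_Θ ψ‖² = Σ_{j : |θ_j| ≤ Θ} |⟨λ_j|ψ⟩|²`. -/
theorem stmt17 {H : Type*} [NormedAddCommGroup H] [InnerProductSpace ℂ H]
    [FiniteDimensional ℂ H]
    (n : ℕ) (lb : OrthonormalBasis (Fin n) ℂ H)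
    (U : H →ₗ[ℂ] H) (θ : Fin n → ℝ)
    (hθ : ∀ j, θ j ∈ Set.Ioc (-Real.pi) Real.pi)
    (hUlb : ∀ j, U (lb j) = Complex.exp ((θ j : ℂ) * Complex.I) • lb j)
    (ψ : H) (hψ : ‖ψ‖ = 1)
    (T : ℕ) (hT : 1 ≤ T) (Θ : ℝ) (hΘ : 0 < Θ) (hΘ' : Θ ≤ Real.pi) :
    ∑ j, Complex.normSq ⟪lb j, ψ⟫ *
        (‖(∑ t ∈ Finset.range T,
          Complex.exp ((t : ℂ) * (θ j : ℂ) * Complex.I))‖) ^ 2 / (T : ℝ) ^ 2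
      ≤ (∑ j ∈ Finset.univ.filter (fun j => |θ j| ≤ Θ), Complex.normSq ⟪lb j, ψ⟫)
        + Real.pi ^ 2 / ((T : ℝ) ^ 2 * Θ ^ 2) :=
  stmt17_general n lb θ hθ ψ hψ T Θ hΘ
end
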